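/- arXiv:1911.11171 — 2 statements merged into one kernel-verified Lean document; each statement's English description precedes it below -/
import Mathlib

section
/- Let (M,b) be a linear constraint system over ℤ_d where d is prime. Then (M,b) admits a quantum solution on some nonzero complex Hilbert space if and only if the element J of the solution group 𝒢(M,b) is not equal to the identity element. -/
/-- ω = exp(2πi/d). -/
noncomputable def rootOfUnity (d : ℕ) : ℂ := Complex.exp (2 * Real.pi * Complex.I / d)

/-- A quantum solution to the linear constraint system `(M, b)` over `ℤ_d` on a complex
Hilbert space `H`: bounded operators `A i` with `A i ^ d = 1`, commuting whenever two
variables appear in a common constraint, and with `∏ j, A j ^ M i j = ω ^ b i • 1` for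
every row `i`. -/
def IsQuantumSolution (d : ℕ) {m n : ℕ} (M : Matrix (Fin m) (Fin n) (ZMod d))
    (b : Fin m → ZMod d) {H : Type} [NormedAddCommGroup H] [InnerProductSpace ℂ H]
    (A : Fin n → H →L[ℂ] H) : Prop :=
  (∀ i, A i ^ d = 1) ∧
  (∀ j k : Fin n, (∃ i, M i j ≠ 0 ∧ M i k ≠ 0) → Commute (A j) (A k)) ∧
  (∀ i : Fin m, (List.ofFn fun j => A j ^ (M i j).val).prod
      = rootOfUnity d ^ (b i).val • (1 : H →L[ℂ] H))

/-- `(M,b)` admits a quantum solution on some nonzero complex Hilbert space. -/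
def HasQuantumSolution (d : ℕ) {m n : ℕ} (M : Matrix (Fin m) (Fin n) (ZMod d))
    (b : Fin m → ZMod d) : Prop :=
  ∃ (H : Type) (_ : NormedAddCommGroup H) (_ : InnerProductSpace ℂ H)
    (_ : CompleteSpace H) (_ : Nontrivial H) (A : Fin n → H →L[ℂ] H),
    IsQuantumSolution d M b A

/-- The defining relations of the solution group of the LCS `(M,b)` over `ℤ_d`, on the
generators `none = J` and `some i = gᵢ`:  `J^d = gᵢ^d = e`, `J` is central,
`g_j g_k = g_k g_j` whenever variables `j,k` share a constraint, and
`J^{-bᵢ} ∏_j g_j^{M i j} = e` for every row `i`. -/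
def lcsRels (d : ℕ) {m n : ℕ} (M : Matrix (Fin m) (Fin n) (ZMod d)) (b : Fin m → ZMod d) :
    Set (FreeGroup (Option (Fin n))) :=
  {w | (∃ x : Option (Fin n), w = FreeGroup.of x ^ d) ∨
    (∃ i : Fin n, w = FreeGroup.of (none : Option (Fin n)) * FreeGroup.of (some i) *
        (FreeGroup.of (none : Option (Fin n)))⁻¹ * (FreeGroup.of (some i))⁻¹) ∨
    (∃ j k : Fin n, (∃ i, M i j ≠ 0 ∧ M i k ≠ 0) ∧
        w = FreeGroup.of (some j) * FreeGroup.of (some k) *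
          (FreeGroup.of (some j))⁻¹ * (FreeGroup.of (some k))⁻¹) ∨
    (∃ i : Fin m, w = (FreeGroup.of (none : Option (Fin n)) ^ (b i).val)⁻¹ *
        (List.ofFn fun j => FreeGroup.of (some j) ^ (M i j).val).prod)}

/-- The solution group `𝒢(M,b)`; `PresentedGroup.of none` is `J` and
`PresentedGroup.of (some i)` is the generator `gᵢ`. -/
abbrev SolutionGroup (d : ℕ) {m n : ℕ} (M : Matrix (Fin m) (Fin n) (ZMod d))
    (b : Fin m → ZMod d) := PresentedGroup (lcsRels d M b)

/-! A quantum solution is the same as a representation of `𝒢(M,b)` by bounded operators in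
which `J` acts as `ω • 1`; on a nonzero space this forces `J ≠ 1`, as `ω ≠ 1`. Conversely, if
`J ≠ 1` then `J` is central of order `d`, so the left regular representation on `ℓ²(𝒢(M,b))`
restricts to the `ω`-eigenspace of `J`, on which `J` acts as `ω • 1`; this eigenspace contains
the nonzero vector `∑ₖ ω⁻ᵏ δ_{Jᵏ}`. -/

open scoped ENNReal

open Module End in
theorem Module.End.geom_sum_apply_mem_eigenspace {K V : Type*} [Field K] [AddCommGroup V]
    [Module K V] {f : End K V} {c : K} {d : ℕ} (hc : c ≠ 0) (hf : (c⁻¹ • f) ^ d = 1) (v : V) :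
    (∑ k ∈ Finset.range d, (c⁻¹ • f) ^ k) v ∈ f.eigenspace c := by
  set P := ∑ k ∈ Finset.range d, (c⁻¹ • f) ^ k
  have hfix : c⁻¹ • f * P = P := by
    have h := mul_geom_sum (c⁻¹ • f) d
    rwa [hf, sub_self, sub_mul, one_mul, sub_eq_zero] at h
  rw [mem_eigenspace_iff]
  calc f (P v) = c • (c⁻¹ • f * P) v := by simp [smul_smul, hc]
    _ = c • P v := by rw [hfix]

theorem Memℓp.comp_equiv {α β E : Type*} [NormedAddCommGroup E] {p : ℝ≥0∞} (e : α ≃ β)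
    {f : β → E} (hf : Memℓp f p) : Memℓp (f ∘ e) p := by
  rcases p.trichotomy with rfl | rfl | hp
  · exact memℓp_zero ((memℓp_zero_iff.mp hf).preimage e.injective.injOn)
  · exact memℓp_infty ((e.surjective.range_comp fun y => ‖f y‖).symm ▸ memℓp_infty_iff.mp hf)
  · exact memℓp_gen ((e.summable_iff (f := fun y => ‖f y‖ ^ p.toReal)).mpr (hf.summable hp))

namespace lp

variable (𝕜 E : Type*) {α β : Type*} [NormedField 𝕜] [NormedAddCommGroup E] [NormedSpace 𝕜 E]
  (p : ℝ≥0∞) [Fact (1 ≤ p)]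

def compEquiv (e : α ≃ β) : lp (fun _ : β => E) p →ₗᵢ[𝕜] lp (fun _ : α => E) p where
  toFun f := ⟨f ∘ e, (lp.memℓp f).comp_equiv e⟩
  map_add' _ _ := rfl
  map_smul' _ _ := rfl
  norm_map' f := by
    rcases p.dichotomy with rfl | hp
    · exact e.iSup_comp (g := fun y => ‖f y‖)
    · have hp : 0 < p.toReal := zero_lt_one.trans_le hp
      rw [lp.norm_eq_tsum_rpow hp, lp.norm_eq_tsum_rpow hp]
      exact congrArg (· ^ (1 / p.toReal)) (e.tsum_eq fun y => ‖f y‖ ^ p.toReal)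

noncomputable def leftRegular (G : Type*) [Group G] :
    G →* (lp (fun _ : G => E) p →L[𝕜] lp (fun _ : G => E) p) where
  toFun g := (compEquiv 𝕜 E p (Equiv.mulLeft g⁻¹)).toContinuousLinearMap
  map_one' := by ext; simp [compEquiv]
  map_mul' g h := by ext; simp [compEquiv, mul_assoc]

variable {𝕜 E p} {G : Type*} [Group G]

@[simp]
theorem leftRegular_apply (g : G) (f : lp (fun _ : G => E) p) (x : G) :
    leftRegular 𝕜 E p G g f x = f (g⁻¹ * x) := rfl

theorem leftRegular_single [DecidableEq G] (g y : G) (v : E) :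
    leftRegular 𝕜 E p G g (lp.single p y v) = lp.single p (g * y) v := by
  ext x
  simp [Pi.single_apply, inv_mul_eq_iff_eq_mul]

end lp

open Module End in
theorem lp.hasEigenvalue_leftRegular {𝕜 G : Type*} [NormedField 𝕜] {p : ℝ≥0∞} [Fact (1 ≤ p)]
    [Group G] {g : G} (hg : IsOfFinOrder g) {c : 𝕜} (hc : c ^ orderOf g = 1) :
    HasEigenvalue (leftRegular 𝕜 𝕜 p G g : End 𝕜 (lp (fun _ : G => 𝕜) p)) c := by
  classical
  have hd : orderOf g ≠ 0 := hg.orderOf_pos.ne'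
  have hc0 : c ≠ 0 := by rintro rfl; exact zero_ne_one ((zero_pow hd).symm.trans hc)
  set T : End 𝕜 (lp (fun _ : G => 𝕜) p) := (leftRegular 𝕜 𝕜 p G g).toLinearMap
  have hT : ∀ k : ℕ, T ^ k = (leftRegular 𝕜 𝕜 p G (g ^ k)).toLinearMap := fun k => by
    rw [map_pow, ContinuousLinearMap.toLinearMap_pow]
  have hTd : (c⁻¹ • T) ^ orderOf g = 1 := by
    rw [smul_pow, hT, pow_orderOf_eq_one, map_one, inv_pow, hc, inv_one, one_smul]
    rfl
  -- `v = ∑ₖ c⁻ᵏ δ_{gᵏ}`, whose value at `1` is `1` because `gᵏ ≠ 1` for `0 < k < orderOf g`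
  set v := (∑ k ∈ Finset.range (orderOf g), (c⁻¹ • T) ^ k) (lp.single p 1 1)
  have hv : v 1 = 1 := by
    simp only [v, LinearMap.sum_apply, lp.coeFn_sum, Finset.sum_apply, smul_pow,
      LinearMap.smul_apply, hT, ContinuousLinearMap.coe_coe, leftRegular_single, mul_one,
      lp.coeFn_smul, Pi.smul_apply, lp.single_apply, smul_eq_mul]
    rw [Finset.sum_eq_single 0]
    · simp
    · intro k hk hk0
      rw [Pi.single_eq_of_ne (pow_ne_one_of_lt_orderOf hk0 (Finset.mem_range.mp hk)).symm, mul_zero]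
    · simp [Nat.pos_of_ne_zero hd]
  refine hasEigenvalue_of_hasEigenvector (x := v)
    ⟨geom_sum_apply_mem_eigenspace hc0 hTd (lp.single p 1 1), fun h => ?_⟩
  rw [h] at hv
  exact zero_ne_one hv

section EigenspaceRestrict

open Module End

variable {𝕜 E G : Type*} [NormedField 𝕜] [NormedAddCommGroup E] [NormedSpace 𝕜 E] [Monoid G]

theorem MonoidHom.mapsTo_eigenspace (ρ : G →* (E →L[𝕜] E)) {T : E →L[𝕜] E}
    (hT : ∀ g, Commute T (ρ g)) (c : 𝕜) (g : G) :
    Set.MapsTo (ρ g) (eigenspace (T : End 𝕜 E) c) (eigenspace (T : End 𝕜 E) c) :=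
  mapsTo_genEigenspace_of_comm (LinearMap.ext fun x => DFunLike.congr_fun (hT g).eq x) c 1

noncomputable def MonoidHom.eigenspaceRestrict (ρ : G →* (E →L[𝕜] E)) {T : E →L[𝕜] E}
    (hT : ∀ g, Commute T (ρ g)) (c : 𝕜) :
    G →* (eigenspace (T : End 𝕜 E) c →L[𝕜] eigenspace (T : End 𝕜 E) c) where
  toFun g := (ρ g).restrict (ρ.mapsTo_eigenspace hT c g)
  map_one' := by ext; simp
  map_mul' g h := by ext; simp only [map_mul]; rfl

theorem MonoidHom.eigenspaceRestrict_eq_smul_one (ρ : G →* (E →L[𝕜] E)) {T : E →L[𝕜] E}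
    (hT : ∀ g, Commute T (ρ g)) (c : 𝕜) {g : G} (hg : ρ g = T) :
    ρ.eigenspaceRestrict hT c g = c • 1 := by
  ext x
  simpa [eigenspaceRestrict, hg] using mem_eigenspace_iff.mp x.2

end EigenspaceRestrict

/-- `z` and `a` satisfy the defining relations of `𝒢(M,b)` in place of `J` and the `gᵢ`. -/
structure SatisfiesLCSRels {R : Type*} [Monoid R] (d : ℕ) {m n : ℕ}
    (M : Matrix (Fin m) (Fin n) (ZMod d)) (b : Fin m → ZMod d) (z : R) (a : Fin n → R) : Prop where
  pow_z : z ^ d = 1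
  pow_a : ∀ i, a i ^ d = 1
  commute_z : ∀ i, Commute z (a i)
  commute_a : ∀ j k, (∃ i, M i j ≠ 0 ∧ M i k ≠ 0) → Commute (a j) (a k)
  prod_row : ∀ i, (List.ofFn fun j => a j ^ (M i j).val).prod = z ^ (b i).val

namespace SatisfiesLCSRels

variable {R S : Type*} [Monoid R] [Monoid S] {d m n : ℕ} {M : Matrix (Fin m) (Fin n) (ZMod d)}
  {b : Fin m → ZMod d} {z : R} {a : Fin n → R}

theorem map (h : SatisfiesLCSRels d M b z a) (φ : R →* S) :
    SatisfiesLCSRels d M b (φ z) (fun i => φ (a i)) where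
  pow_z := by rw [← map_pow, h.pow_z, map_one]
  pow_a i := by rw [← map_pow, h.pow_a i, map_one]
  commute_z i := (h.commute_z i).map φ
  commute_a j k hjk := (h.commute_a j k hjk).map φ
  prod_row i := by
    simpa [map_list_prod, List.map_ofFn, Function.comp_def] using congrArg φ (h.prod_row i)

theorem of_map {φ : R →* S} (hφ : Function.Injective φ)
    (h : SatisfiesLCSRels d M b (φ z) (fun i => φ (a i))) : SatisfiesLCSRels d M b z a where
  pow_z := hφ (by rw [map_pow, h.pow_z, map_one])
  pow_a i := hφ (by rw [map_pow, h.pow_a i, map_one])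
  commute_z i := hφ (by rw [map_mul, map_mul, (h.commute_z i).eq])
  commute_a j k hjk := hφ (by rw [map_mul, map_mul, (h.commute_a j k hjk).eq])
  prod_row i := hφ (by simpa [map_list_prod, List.map_ofFn, Function.comp_def] using h.prod_row i)

end SatisfiesLCSRels

theorem forall_lcsRels_iff {K : Type*} [Group K] {d m n : ℕ} {M : Matrix (Fin m) (Fin n) (ZMod d)}
    {b : Fin m → ZMod d} (φ : FreeGroup (Option (Fin n)) →* K) :
    (∀ r ∈ lcsRels d M b, φ r = 1) ↔
      SatisfiesLCSRels d M b (φ (.of none)) (fun i => φ (.of (some i))) := by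
  have hcomm (x y) : φ (x * y * x⁻¹ * y⁻¹) = 1 ↔ Commute (φ x) (φ y) := by
    rw [map_mul, map_mul, map_mul, map_inv, map_inv]
    exact commutatorElement_eq_one_iff_commute
  have hrow (i : Fin m) : φ ((FreeGroup.of none ^ (b i).val)⁻¹ *
        (List.ofFn fun j => FreeGroup.of (some j) ^ (M i j).val).prod) = 1 ↔
      (List.ofFn fun j => φ (.of (some j)) ^ (M i j).val).prod = φ (.of none) ^ (b i).val := by
    rw [map_mul, map_inv, map_pow, inv_mul_eq_one, eq_comm, map_list_prod, List.map_ofFn]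
    simp [Function.comp_def]
  constructor
  · intro h
    exact
      { pow_z := by simpa using h _ (Or.inl ⟨none, rfl⟩)
        pow_a i := by simpa using h _ (Or.inl ⟨some i, rfl⟩)
        commute_z i := (hcomm _ _).mp (h _ (Or.inr (Or.inl ⟨i, rfl⟩)))
        commute_a j k hjk := (hcomm _ _).mp (h _ (Or.inr (Or.inr (Or.inl ⟨j, k, hjk, rfl⟩))))
        prod_row i := (hrow i).mp (h _ (Or.inr (Or.inr (Or.inr ⟨i, rfl⟩)))) }
  · rintro h r (⟨x, rfl⟩ | ⟨i, rfl⟩ | ⟨j, k, hjk, rfl⟩ | ⟨i, rfl⟩)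
    · cases x
      · simpa using h.pow_z
      · simpa using h.pow_a _
    · exact (hcomm _ _).mpr (h.commute_z i)
    · exact (hcomm _ _).mpr (h.commute_a j k hjk)
    · exact (hrow i).mpr (h.prod_row i)

namespace SolutionGroup

variable {d m n : ℕ} {M : Matrix (Fin m) (Fin n) (ZMod d)} {b : Fin m → ZMod d}

theorem satisfiesLCSRels_of :
    SatisfiesLCSRels d M b (PresentedGroup.of none : SolutionGroup d M b)
      (fun i => PresentedGroup.of (some i)) :=
  (forall_lcsRels_iff (PresentedGroup.mk _)).mp fun _ hr => PresentedGroup.one_of_mem hr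

theorem commute_of_none (g : SolutionGroup d M b) : Commute (PresentedGroup.of none) g := by
  have hJ : PresentedGroup.of none ∈
      Subgroup.centralizer (Set.range (PresentedGroup.of (rels := lcsRels d M b))) := by
    rw [Subgroup.mem_centralizer_iff]
    rintro _ ⟨_ | i, rfl⟩
    exacts [rfl, (satisfiesLCSRels_of.commute_z i).eq.symm]
  rw [← Subgroup.centralizer_closure, PresentedGroup.closure_range_of] at hJ
  exact (Subgroup.mem_centralizer_iff.mp hJ g trivial).symm

theorem exists_monoidHom {R : Type*} [Monoid R] {z : R} {a : Fin n → R} (hd : d ≠ 0)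
    (h : SatisfiesLCSRels d M b z a) :
    ∃ φ : SolutionGroup d M b →* R, φ (PresentedGroup.of none) = z ∧
      ∀ i, φ (PresentedGroup.of (some i)) = a i := by
  -- `PresentedGroup.toGroup` needs a group as target; `z` and the `a i` are units, having
  -- `d`-th power `1`.
  let f : Option (Fin n) → Rˣ := fun x =>
    x.elim (Units.ofPowEqOne z d h.pow_z hd) fun i => Units.ofPowEqOne (a i) d (h.pow_a i) hd
  have hf : ∀ r ∈ lcsRels d M b, FreeGroup.lift f r = 1 :=
    (forall_lcsRels_iff _).mpr (.of_map (φ := Units.coeHom R) Units.val_injective (by simpa [f]))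
  exact ⟨(Units.coeHom R).comp (PresentedGroup.toGroup hf), by simp [f], by simp [f]⟩

end SolutionGroup

theorem rootOfUnity_pow_self (d : ℕ) : rootOfUnity d ^ d = 1 := by
  rcases eq_or_ne d 0 with rfl | hd
  · exact pow_zero _
  · exact (Complex.isPrimitiveRoot_exp d hd).pow_eq_one

theorem isQuantumSolution_iff_satisfiesLCSRels {d m n : ℕ} {M : Matrix (Fin m) (Fin n) (ZMod d)}
    {b : Fin m → ZMod d} {H : Type} [NormedAddCommGroup H] [InnerProductSpace ℂ H]
    {A : Fin n → H →L[ℂ] H} :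
    IsQuantumSolution d M b A ↔ SatisfiesLCSRels d M b (rootOfUnity d • 1) A := by
  have hz : ∀ k : ℕ, (rootOfUnity d • 1 : H →L[ℂ] H) ^ k = rootOfUnity d ^ k • 1 := fun k => by
    rw [smul_pow, one_pow]
  refine ⟨fun ⟨hpow, hcomm, hrow⟩ => ⟨?_, hpow, fun i => ?_, hcomm, fun i => ?_⟩,
    fun h => ⟨h.pow_a, h.commute_a, fun i => ?_⟩⟩
  · rw [hz, rootOfUnity_pow_self, one_smul]
  · exact (Commute.one_left _).smul_left _
  · rw [hz, hrow]
  · rw [h.prod_row, hz]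

/-- Cleve et al.: for `d` prime, the LCS `(M,b)` over `ℤ_d` admits a
quantum solution on some nonzero complex Hilbert space iff the element `J` of the
solution group `𝒢(M,b)` is not the identity. -/
theorem hasQuantumSolution_iff_J_ne_one (d : ℕ) (hd : d.Prime) {m n : ℕ}
    (M : Matrix (Fin m) (Fin n) (ZMod d)) (b : Fin m → ZMod d) :
    HasQuantumSolution d M b ↔
      (PresentedGroup.of (none : Option (Fin n)) : SolutionGroup d M b) ≠ 1 := by
  have hω : IsPrimitiveRoot (rootOfUnity d) d := Complex.isPrimitiveRoot_exp d hd.ne_zero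
  constructor
  · rintro ⟨H, _, _, _, _, A, hA⟩ hJ
    obtain ⟨φ, hφJ, -⟩ := SolutionGroup.exists_monoidHom hd.ne_zero
      (isQuantumSolution_iff_satisfiesLCSRels.mp hA)
    rw [hJ, map_one] at hφJ
    exact hω.ne_one hd.one_lt
      (smul_left_injective ℂ one_ne_zero (hφJ.symm.trans (one_smul ℂ 1).symm))
  · intro hJ
    have := Fact.mk hd
    set J : SolutionGroup d M b := PresentedGroup.of none
    set ρ := lp.leftRegular ℂ ℂ 2 (SolutionGroup d M b)
    have hT : ∀ g, Commute (ρ J) (ρ g) := fun g => (SolutionGroup.commute_of_none g).map ρ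
    have hJd : J ^ d = 1 := SolutionGroup.satisfiesLCSRels_of.pow_z
    have hc : rootOfUnity d ^ orderOf J = 1 := by
      rw [orderOf_eq_prime hJd hJ, rootOfUnity_pow_self]
    have hV : Nontrivial (Module.End.eigenspace (ρ J).toLinearMap (rootOfUnity d)) :=
      Submodule.nontrivial_iff_ne_bot.mpr <| lp.hasEigenvalue_leftRegular
        (isOfFinOrder_iff_pow_eq_one.mpr ⟨d, hd.pos, hJd⟩) hc
    set σ := ρ.eigenspaceRestrict hT (rootOfUnity d)
    refine ⟨_, inferInstance, inferInstance, inferInstance, hV, fun i => σ (.of (some i)), ?_⟩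
    rw [isQuantumSolution_iff_satisfiesLCSRels, ← ρ.eigenspaceRestrict_eq_smul_one hT _ rfl]
    exact SolutionGroup.satisfiesLCSRels_of.map σ
end

section
/- Let d > 2 be prime and let (M,b) be a linear constraint system over ℤ_d of magic-pentagram form: variables x_1,…,x_10 with constraints a_1x_1+a_2x_2+a_3x_3+a_4x_4=b_1, a_1'x_1+a_5x_5+a_6x_6+a_7x_7=b_2, a_2'x_2+a_5'x_5+a_8x_8+a_9x_9=b_3, a_3'x_3+a_6'x_6+a_8'x_8+a_{10}x_{10}=b_4, a_4'x_4+a_7'x_7+a_9'x_9+a_{10}'x_{10}=b_5, where all coefficients a_i, a_i' are nonzero elements of ℤ_d. Then (M,b) admits a quantum solution on some nonzero complex Hilbert space if and only if it has a classical solution. -/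
/-- The coefficient matrix of the generalized magic pentagram LCS: rows are the
constraints `a₁x₁+a₂x₂+a₃x₃+a₄x₄ = b₁`, `a₁'x₁+a₅x₅+a₆x₆+a₇x₇ = b₂`,
`a₂'x₂+a₅'x₅+a₈x₈+a₉x₉ = b₃`, `a₃'x₃+a₆'x₆+a₈'x₈+a₁₀x₁₀ = b₄`,
`a₄'x₄+a₇'x₇+a₉'x₉+a₁₀'x₁₀ = b₅`. -/
def magicPentagramMatrix {d : ℕ} (a a' : Fin 10 → ZMod d) :
    Matrix (Fin 5) (Fin 10) (ZMod d) :=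
  Matrix.of
    ![![a 0, a 1, a 2, a 3, 0, 0, 0, 0, 0, 0],
      ![a' 0, 0, 0, 0, a 4, a 5, a 6, 0, 0, 0],
      ![0, a' 1, 0, 0, a' 4, 0, 0, a 7, a 8, 0],
      ![0, 0, a' 2, 0, 0, a' 5, 0, a' 7, 0, a 9],
      ![0, 0, 0, a' 3, 0, 0, a' 6, 0, a' 8, a' 9]]

open Matrix

theorem List.prod_map_pow_of_pairwise_commute {M : Type*} [Monoid M] {l : List M}
    (hl : l.Pairwise Commute) (n : ℕ) : (l.map (· ^ n)).prod = l.prod ^ n := by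
  induction l with
  | nil => simp
  | cons a l ih =>
    rw [List.pairwise_cons] at hl
    rw [List.map_cons, List.prod_cons, List.prod_cons, ih hl.2,
      (Commute.list_prod_right l a hl.1).mul_pow]

theorem List.prod_map_eq_prod_ofFn_succAbove {M : Type*} [Monoid M] {n : ℕ}
    (f : Fin (n + 1) → M) {u : Fin (n + 1)}
    (hf : ∀ v w, v ≠ u → w ≠ u → Commute (f v) (f w)) {l : List (Fin (n + 1))}
    (hl : (u :: l).Nodup) (hlen : l.length = n) :
    (l.map f).prod = (List.ofFn fun i => f (u.succAbove i)).prod := by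
  rw [List.nodup_cons] at hl
  have hne : ∀ v ∈ l, v ≠ u := fun v hv h => hl.1 (h ▸ hv)
  have hsub : l.Subperm (List.ofFn u.succAbove) :=
    hl.2.subperm fun v hv => List.mem_ofFn.2 (Fin.exists_succAbove_eq (hne v hv))
  have hperm : l.Perm (List.ofFn u.succAbove) := hsub.perm_of_length_le (by simp [hlen])
  rw [← Function.comp_def, ← List.map_ofFn]
  exact (hperm.map f).prod_eq' (List.pairwise_map.2 (hl.2.imp_of_mem
    fun hv hw _ => hf _ _ (hne _ hv) (hne _ hw)))

section ZModPow

variable {M : Type*} [Monoid M] {d : ℕ} {g : M}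

theorem pow_eq_pow_of_natCast_eq (hg : g ^ d = 1) {m n : ℕ} (h : (m : ZMod d) = n) :
    g ^ m = g ^ n := by
  rw [pow_eq_pow_mod m hg, pow_eq_pow_mod n hg, (ZMod.natCast_eq_natCast_iff' m n d).1 h]

theorem pow_val_mul_pow_val [NeZero d] (hg : g ^ d = 1) (α β : ZMod d) :
    g ^ α.val * g ^ β.val = g ^ (α + β).val :=
  pow_add g _ _ ▸ pow_eq_pow_of_natCast_eq hg (by simp)

theorem pow_val_pow_val [NeZero d] (hg : g ^ d = 1) (α β : ZMod d) :
    (g ^ α.val) ^ β.val = g ^ (α * β).val :=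
  pow_mul g _ _ ▸ pow_eq_pow_of_natCast_eq hg (by simp)

end ZModPow

theorem Matrix.exists_mulVec_eq_of_forall_vecMul_eq_zero {K m n : Type*} [Field K] [Fintype m]
    [Fintype n] [DecidableEq m] [DecidableEq n] (M : Matrix m n K) (b : m → K)
    (h : ∀ y, y ᵥ* M = 0 → y ⬝ᵥ b = 0) : ∃ x, M *ᵥ x = b := by
  by_contra! hb
  obtain ⟨f, hfb, hf⟩ := Submodule.exists_dual_map_eq_bot_of_notMem
    (p := LinearMap.range M.mulVecLin) (x := b) (by simpa using hb) inferInstance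
  set y := (dotProductEquiv K m).symm f
  have hfy : ∀ v, f v = y ⬝ᵥ v := fun v => by
    rw [← dotProductEquiv_apply_apply, LinearEquiv.apply_symm_apply]
  refine hfb ((hfy b).trans (h y (funext fun j => ?_)))
  have hj : f (M *ᵥ Pi.single j 1) = 0 := by
    have := Submodule.mem_map_of_mem (f := f)
      (LinearMap.mem_range_self M.mulVecLin (Pi.single j 1))
    rwa [hf, Submodule.mem_bot] at this
  rwa [hfy, dotProduct_mulVec, dotProduct_single, mul_one] at hj

section Group

open scoped commutatorElement

variable {G : Type*} [Group G]

theorem eq_commutatorElement_of_central {a b e f c : G} (hc : ∀ g, Commute c g)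
    (hab : Commute a b) (hae : Commute a e) (hbf : Commute b f) (hef : Commute e f)
    (h : c = a * b * e * f * a⁻¹ * e⁻¹ * b⁻¹ * f⁻¹) : c = ⁅a, f⁆ := by
  have hconj : c = (b * e) * ⁅a, f⁆ * (b * e)⁻¹ := calc
    c = a * (b * e) * f * a⁻¹ * ((b * e)⁻¹ * f⁻¹) := by rw [h]; group
    _ = (b * e) * a * f * a⁻¹ * (f⁻¹ * (b * e)⁻¹) := by
      rw [(hab.mul_right hae).eq, (hbf.mul_left hef).inv_inv.eq]
    _ = (b * e) * ⁅a, f⁆ * (b * e)⁻¹ := by rw [commutatorElement_def]; group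
  calc c = (b * e)⁻¹ * c * (b * e) := by rw [mul_assoc, (hc _).eq, inv_mul_cancel_left]
    _ = ⁅a, f⁆ := by rw [hconj]; group

theorem sq_eq_one_of_eq_commutatorElement {a f c : G} (hc : ∀ g, Commute c g)
    (h : c = ⁅a, f⁆) (h' : c = ⁅a⁻¹, f⁆) : c ^ 2 = 1 := by
  rw [sq, mul_eq_one_iff_eq_inv]
  calc c = a⁻¹ * ⁅f, a⁆ * a := h'.trans (commutatorElement_inv_left a f)
    _ = a⁻¹ * c⁻¹ * a := by rw [← commutatorElement_inv, ← h]
    _ = c⁻¹ := by rw [mul_assoc, (hc a).inv_left.eq, inv_mul_cancel_left]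

/-- The indices are the five lines of a pentagram: `X u v` sits on the point where lines `u`
and `v` meet, as it occurs in line `u`, and `c u` is the value of line `u`. -/
structure IsPentagramRelation (X : Fin 5 → Fin 5 → G) (c : Fin 5 → G) : Prop where
  inv_swap : ∀ ⦃u v⦄, u ≠ v → X v u = (X u v)⁻¹
  commute : ∀ ⦃u v w⦄, v ≠ u → w ≠ u → Commute (X u v) (X u w)
  central : ∀ u g, Commute (c u) g
  row : ∀ u, (List.ofFn fun i => X u (u.succAbove i)).prod = c u

namespace IsPentagramRelation

variable {X : Fin 5 → Fin 5 → G} {c : Fin 5 → G}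

theorem prod_map_eq (hX : IsPentagramRelation X c) {u : Fin 5} {l : List (Fin 5)}
    (hl : (u :: l).Nodup) (hlen : l.length = 4) : (l.map (X u)).prod = c u :=
  (List.prod_map_eq_prod_ofFn_succAbove (X u) (fun _ _ hv hw => hX.commute hv hw) hl hlen).trans
    (hX.row u)

theorem comp (hX : IsPentagramRelation X c) {σ : Fin 5 → Fin 5} (hσ : σ.Injective) :
    IsPentagramRelation (fun u v => X (σ u) (σ v)) (c ∘ σ) where
  inv_swap _ _ h := hX.inv_swap (hσ.ne h)
  commute _ _ _ hv hw := hX.commute (hσ.ne hv) (hσ.ne hw)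
  central u := hX.central (σ u)
  row u := by
    have hl : (u :: List.ofFn u.succAbove).Nodup :=
      List.nodup_cons.2 ⟨by simp, List.nodup_ofFn.2 Fin.succAbove_right_injective⟩
    simpa [List.map_ofFn] using
      hX.prod_map_eq (l := (List.ofFn u.succAbove).map σ) (by simpa using hl.map hσ) (by simp)

theorem commute_swap (hX : IsPentagramRelation X c) {u v w : Fin 5} (hu : u ≠ w) (hv : v ≠ w) :
    Commute (X u w) (X v w) := by
  simpa [hX.inv_swap hu.symm, hX.inv_swap hv.symm] using (hX.commute hu hv).inv_inv

theorem commute_prod (hX : IsPentagramRelation X c) (g : G) :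
    Commute (c 0 * c 1 * c 2 * c 3 * c 4) g :=
  ((((hX.central 0 g).mul_left (hX.central 1 g)).mul_left (hX.central 2 g)).mul_left
    (hX.central 3 g)).mul_left (hX.central 4 g)

theorem prod_eq_commutatorElement (hX : IsPentagramRelation X c) :
    c 0 * c 1 * c 2 * c 3 * c 4 = ⁅X 0 2, X 1 3⁆ := by
  have row : ∀ u v₁ v₂ v₃ v₄, [u, v₁, v₂, v₃, v₄].Nodup →
      X u v₁ * X u v₂ * X u v₃ * X u v₄ = c u := fun _ _ _ _ _ h => by
    simpa [mul_assoc] using hX.prod_map_eq h rfl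
  -- Solving lines `0`–`3` for their points on line `4` and substituting into line `4`
  -- leaves a word in the six points of lines `0`–`3`.
  have elim : ∀ u v₁ v₂ v₃, [u, v₁, v₂, v₃, 4].Nodup →
      X u v₁ * X u v₂ * X u v₃ = c u * X 4 u := fun u v₁ v₂ v₃ h => by
    rw [hX.inv_swap (u := u) (v := 4) (by rintro rfl; simp at h), ← row u v₁ v₂ v₃ 4 h]
    group
  have hrows : c 0 * c 1 * c 2 * c 3 * c 4 =
      X 0 2 * X 0 3 * X 0 1 * (X 1 0 * X 1 2 * X 1 3) * (X 2 0 * X 2 1 * X 2 3) *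
        (X 3 2 * X 3 0 * X 3 1) := by
    rw [elim 0 2 3 1 (by decide), elim 1 0 2 3 (by decide), elim 2 0 1 3 (by decide),
      elim 3 2 0 1 (by decide), ← row 4 0 1 2 3 (by decide)]
    simp only [mul_assoc, fun u v r => ((hX.central u (X 4 v)).left_comm r).symm]
  refine hrows.trans (eq_commutatorElement_of_central (b := X 0 3) (e := X 1 2)
    (hrows ▸ hX.commute_prod) (hX.commute (by decide) (by decide))
    (hX.commute_swap (by decide) (by decide)) (hX.commute_swap (by decide) (by decide))
    (hX.commute (by decide) (by decide)) ?_)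
  rw [hX.inv_swap (u := 0) (v := 1) (by decide), hX.inv_swap (u := 0) (v := 2) (by decide),
    hX.inv_swap (u := 1) (v := 2) (by decide), hX.inv_swap (u := 2) (v := 3) (by decide),
    hX.inv_swap (u := 0) (v := 3) (by decide), hX.inv_swap (u := 1) (v := 3) (by decide)]
  group

theorem sq_prod_eq_one (hX : IsPentagramRelation X c) :
    (c 0 * c 1 * c 2 * c 3 * c 4) ^ 2 = 1 := by
  have h₀₂ := (hX.comp (Equiv.swap (0 : Fin 5) 2).injective).prod_eq_commutatorElement
  simp only [Function.comp_apply, Equiv.swap_apply_def, Fin.reduceEq, ↓reduceIte,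
    hX.inv_swap (u := 0) (v := 2) (by decide)] at h₀₂
  refine sq_eq_one_of_eq_commutatorElement hX.commute_prod hX.prod_eq_commutatorElement
    (Eq.trans ?_ h₀₂)
  congr 2
  rw [(hX.central 0 (c 1)).eq, mul_assoc, (hX.central 0 (c 2)).eq, ← mul_assoc,
    (hX.central 1 (c 2)).eq]

end IsPentagramRelation

end Group

theorem isPrimitiveRoot_rootOfUnity (d : ℕ) [NeZero d] : IsPrimitiveRoot (rootOfUnity d) d :=
  Complex.isPrimitiveRoot_exp d (NeZero.ne d)

section QuantumSolution

variable {d m n : ℕ} {M : Matrix (Fin m) (Fin n) (ZMod d)} {b : Fin m → ZMod d}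
  {H : Type} [NormedAddCommGroup H] [InnerProductSpace ℂ H] {A : Fin n → H →L[ℂ] H}

theorem IsQuantumSolution.commute_pow_row (hA : IsQuantumSolution d M b A) (i : Fin m)
    (j k : Fin n) : Commute (A j ^ (M i j).val) (A k ^ (M i k).val) := by
  by_cases hj : M i j = 0
  · simp [hj]
  by_cases hk : M i k = 0
  · simp [hk]
  exact (hA.2.1 j k ⟨i, hj, hk⟩).pow_pow _ _

theorem IsQuantumSolution.prod_ofFn_pow_mul [NeZero d] (hA : IsQuantumSolution d M b A)
    (i : Fin m) (t : ZMod d) :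
    (List.ofFn fun j => A j ^ (t * M i j).val).prod = rootOfUnity d ^ (t * b i).val • 1 := calc
  _ = ((List.ofFn fun j => A j ^ (M i j).val).map (· ^ t.val)).prod := by
    simp only [List.map_ofFn, Function.comp_def, pow_val_pow_val (hA.1 _), mul_comm t]
  _ = (rootOfUnity d ^ (b i).val • (1 : H →L[ℂ] H)) ^ t.val := by
    rw [List.prod_map_pow_of_pairwise_commute
      (List.pairwise_ofFn.2 fun j k _ => hA.commute_pow_row i j k), hA.2.2 i]
  _ = rootOfUnity d ^ (t * b i).val • 1 := by
    rw [smul_pow, one_pow, pow_val_pow_val (isPrimitiveRoot_rootOfUnity d).pow_eq_one, mul_comm]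

theorem hasQuantumSolution_of_mulVec_eq [NeZero d] {x : Fin n → ZMod d} (hx : M *ᵥ x = b) :
    HasQuantumSolution d M b := by
  have hω := (isPrimitiveRoot_rootOfUnity d).pow_eq_one
  refine ⟨ℂ, inferInstance, inferInstance, inferInstance, inferInstance,
    fun j => algebraMap ℂ (ℂ →L[ℂ] ℂ) (rootOfUnity d ^ (x j).val), fun j => ?_,
    fun j k _ => Algebra.commutes _ _, fun i => ?_⟩
  · rw [← map_pow, ← pow_mul, mul_comm, pow_mul, hω, one_pow, map_one]
  · show (List.ofFn fun j =>
        algebraMap ℂ (ℂ →L[ℂ] ℂ) (rootOfUnity d ^ (x j).val) ^ (M i j).val).prod =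
      rootOfUnity d ^ (b i).val • 1
    calc _ = ((List.ofFn fun j => rootOfUnity d ^ ((x j).val * (M i j).val)).map
          (algebraMap ℂ (ℂ →L[ℂ] ℂ))).prod := by
          simp [List.map_ofFn, Function.comp_def, pow_mul]
      _ = algebraMap ℂ _ (rootOfUnity d ^ ∑ j, (x j).val * (M i j).val) := by
          rw [← map_list_prod, List.prod_ofFn, Finset.prod_pow_eq_pow_sum]
      _ = algebraMap ℂ _ (rootOfUnity d ^ (b i).val) := by
          rw [pow_eq_pow_of_natCast_eq hω (n := (b i).val)
            (by simp [← hx, mulVec, dotProduct, mul_comm])]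
      _ = rootOfUnity d ^ (b i).val • 1 := Algebra.algebraMap_eq_smul_one _

end QuantumSolution

/-- Lines `u ≠ v` of the pentagram meet in the variable `pentagramPoint u v`; the diagonal is
a junk value. -/
def pentagramPoint : Fin 5 → Fin 5 → Fin 10 :=
  ![![0, 0, 1, 2, 3], ![0, 0, 4, 5, 6], ![1, 4, 0, 7, 8], ![2, 5, 7, 0, 9], ![3, 6, 8, 9, 0]]

theorem pentagramPoint_comm (u v : Fin 5) : pentagramPoint u v = pentagramPoint v u := by
  revert u v; decide

section MagicPentagram

variable {d : ℕ} {a a' : Fin 10 → ZMod d}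

theorem magicPentagramMatrix_ne_zero_iff (ha : ∀ i, a i ≠ 0) (ha' : ∀ i, a' i ≠ 0)
    {u v : Fin 5} (huv : u ≠ v) (w : Fin 5) :
    magicPentagramMatrix a a' w (pentagramPoint u v) ≠ 0 ↔ w = u ∨ w = v := by
  fin_cases u <;> fin_cases v <;> fin_cases w <;>
    simp_all [magicPentagramMatrix, pentagramPoint]

theorem prod_ofFn_pow_magicPentagramMatrix {N : Type*} [Monoid N] (B : Fin 10 → N) (t : ZMod d)
    (u : Fin 5) :
    (List.ofFn fun j => B j ^ (t * magicPentagramMatrix a a' u j).val).prod =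
      (List.ofFn fun i => B (pentagramPoint u (u.succAbove i)) ^
        (t * magicPentagramMatrix a a' u (pentagramPoint u (u.succAbove i))).val).prod := by
  fin_cases u <;> simp [List.ofFn_succ, magicPentagramMatrix, pentagramPoint, Fin.succAbove]

theorem IsQuantumSolution.exists_isPentagramRelation [NeZero d] {b : Fin 5 → ZMod d}
    {H : Type} [NormedAddCommGroup H] [InnerProductSpace ℂ H] {A : Fin 10 → H →L[ℂ] H}
    (ha : ∀ i, a i ≠ 0) (ha' : ∀ i, a' i ≠ 0)
    (hA : IsQuantumSolution d (magicPentagramMatrix a a') b A) {y : Fin 5 → ZMod d}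
    (hy : y ᵥ* magicPentagramMatrix a a' = 0) :
    ∃ (X : Fin 5 → Fin 5 → (H →L[ℂ] H)ˣ) (c : Fin 5 → (H →L[ℂ] H)ˣ),
      IsPentagramRelation X c ∧ ∀ u, (c u : H →L[ℂ] H) = rootOfUnity d ^ (y u * b u).val • 1 := by
  set M := magicPentagramMatrix a a'
  let U j : (H →L[ℂ] H)ˣ := Units.ofPowEqOne (A j) d (hA.1 j) (NeZero.ne d)
  let X u v := U (pentagramPoint u v) ^ (y u * M u (pentagramPoint u v)).val
  have hrow : ∀ u, ((List.ofFn fun i => X u (u.succAbove i)).prod : H →L[ℂ] H) =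
      rootOfUnity d ^ (y u * b u).val • 1 := fun u => by
    rw [← hA.prod_ofFn_pow_mul u (y u), prod_ofFn_pow_magicPentagramMatrix,
      ← Units.coeHom_apply, map_list_prod, List.map_ofFn]
    simp [X, U, M, Function.comp_def]
  refine ⟨X, fun u => (List.ofFn fun i => X u (u.succAbove i)).prod,
    ⟨fun u v huv => ?_, fun u v w hv hw => ?_, fun u g => ?_, fun u => rfl⟩, hrow⟩
  · have hcol : y v * M v (pentagramPoint u v) + y u * M u (pentagramPoint u v) = 0 := by
      have h := congrFun hy (pentagramPoint u v)
      rwa [vecMul, dotProduct, Fintype.sum_eq_add v u huv.symm fun w hw => mul_eq_zero_of_right _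
        (not_not.1 ((magicPentagramMatrix_ne_zero_iff ha ha' huv w).not.2 (by tauto)))] at h
    rw [eq_inv_iff_mul_eq_one]
    ext
    simp [X, U, pentagramPoint_comm v u, pow_val_mul_pow_val (hA.1 _), hcol]
  · refine Commute.pow_pow (Commute.units_of_val (hA.2.1 _ _ ⟨u, ?_, ?_⟩)) _ _
    · exact (magicPentagramMatrix_ne_zero_iff ha ha' hv.symm u).2 (Or.inl rfl)
    · exact (magicPentagramMatrix_ne_zero_iff ha ha' hw.symm u).2 (Or.inl rfl)
  · refine Commute.units_of_val ?_
    rw [hrow]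
    exact (Commute.one_left _).smul_left _

end MagicPentagram

theorem eq_zero_of_sq_rootOfUnity_pow_val_eq_one {d : ℕ} (hd : d.Prime) (hd2 : 2 < d)
    {s : ZMod d} (h : (rootOfUnity d ^ s.val) ^ 2 = 1) : s = 0 := by
  have : NeZero d := ⟨hd.ne_zero⟩
  rw [← pow_mul, (isPrimitiveRoot_rootOfUnity d).pow_eq_one_iff_dvd] at h
  have hs : d ∣ s.val := (hd.dvd_mul.1 h).resolve_right fun h2 => by
    have := Nat.le_of_dvd two_pos h2
    omega
  rw [← ZMod.val_eq_zero]
  exact Nat.eq_zero_of_dvd_of_lt hs (ZMod.val_lt s)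

theorem IsQuantumSolution.magicPentagram_dotProduct_eq_zero {d : ℕ} (hd : d.Prime)
    (hd2 : 2 < d) {a a' : Fin 10 → ZMod d} (ha : ∀ i, a i ≠ 0) (ha' : ∀ i, a' i ≠ 0)
    {b : Fin 5 → ZMod d} {H : Type} [NormedAddCommGroup H] [InnerProductSpace ℂ H]
    [Nontrivial H] {A : Fin 10 → H →L[ℂ] H}
    (hA : IsQuantumSolution d (magicPentagramMatrix a a') b A) {y : Fin 5 → ZMod d}
    (hy : y ᵥ* magicPentagramMatrix a a' = 0) : y ⬝ᵥ b = 0 := by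
  have : NeZero d := ⟨hd.ne_zero⟩
  obtain ⟨X, c, hX, hc⟩ := hA.exists_isPentagramRelation ha ha' hy
  have h := congrArg Units.val hX.sq_prod_eq_one
  simp only [Units.val_pow_eq_pow_val, Units.val_mul, hc, Units.val_one,
    ← Algebra.algebraMap_eq_smul_one, ← map_mul, ← map_pow] at h
  rw [← map_one (algebraMap ℂ (H →L[ℂ] H)), (algebraMap ℂ (H →L[ℂ] H)).injective.eq_iff] at h
  simp only [pow_val_mul_pow_val (isPrimitiveRoot_rootOfUnity d).pow_eq_one] at h
  simpa [dotProduct, Fin.sum_univ_five] using eq_zero_of_sq_rootOfUnity_pow_val_eq_one hd hd2 h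

/-- for `d > 2` prime, a magic-pentagram-form LCS over `ℤ_d` with all
coefficients nonzero admits a quantum solution on some nonzero complex Hilbert space iff
it has a classical solution. -/
theorem magicPentagram_quantum_iff_classical (d : ℕ) (hd : d.Prime) (hd2 : 2 < d)
    (a a' : Fin 10 → ZMod d) (ha : ∀ i, a i ≠ 0) (ha' : ∀ i, a' i ≠ 0)
    (b : Fin 5 → ZMod d) :
    HasQuantumSolution d (magicPentagramMatrix a a') b ↔
      ∃ x : Fin 10 → ZMod d, (magicPentagramMatrix a a').mulVec x = b := by
  have : Fact d.Prime := ⟨hd⟩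
  refine ⟨fun ⟨H, _, _, _, _, A, hA⟩ => ?_, fun ⟨x, hx⟩ => hasQuantumSolution_of_mulVec_eq hx⟩
  exact exists_mulVec_eq_of_forall_vecMul_eq_zero _ b fun y hy =>
    hA.magicPentagram_dotProduct_eq_zero hd hd2 ha ha' hy
end
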